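/- arXiv:1207.6568 — 4 statements merged into one kernel-verified Lean document; each statement's English description precedes it below -/
import Mathlib

section
/- Let $\mathcal{A}_1$ and $\mathcal{A}_2$ be collections of subsets of spaces $\mathcal{T}_1$ and $\mathcal{T}_2$ respectively, each satisfying the Shape hypothesis: whenever a set in the collection is covered by a finite union of sets from the collection, it is contained in one of them. Then the product collection $\mathcal{A} = \{A_1 \times A_2 : A_1 \in \mathcal{A}_1, A_2 \in \mathcal{A}_2\}$ on $\mathcal{T}_1 \times \mathcal{T}_2$ also satisfies the Shape hypothesis. -/
/-- A collection `𝒞` of subsets of `T` satisfies the *Shape hypothesis* if whenever a set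
of the collection is covered by a finite union of sets from the collection, it is contained
in one of them. -/
def ShapeHyp {T : Type*} (𝒞 : Set (Set T)) : Prop :=
  ∀ A ∈ 𝒞, ∀ (k : ℕ) (f : Fin k → Set T), (∀ i, f i ∈ 𝒞) →
    A ⊆ ⋃ i, f i → ∃ i, A ⊆ f i

lemma shape_finset {T : Type*} {𝒞 : Set (Set T)} (h : ShapeHyp 𝒞) {A : Set T} (hA : A ∈ 𝒞)
    {ι : Type*} (s : Finset ι) (f : ι → Set T) (hf : ∀ i ∈ s, f i ∈ 𝒞)
    (hcov : A ⊆ ⋃ i ∈ s, f i) : ∃ i ∈ s, A ⊆ f i := by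
  have e := s.equivFin
  have hcov' : A ⊆ ⋃ j : Fin s.card, f (e.symm j) := by
    intro x hx
    obtain ⟨i, hi, hxi⟩ := Set.mem_iUnion₂.1 (hcov hx)
    exact Set.mem_iUnion.2 ⟨e ⟨i, hi⟩, by simpa using hxi⟩
  obtain ⟨j, hj⟩ := h A hA s.card (fun j => f (e.symm j)) (fun j => hf _ (e.symm j).2) hcov'
  exact ⟨e.symm j, (e.symm j).2, hj⟩

/-- If `𝒜₁` and `𝒜₂` are collections of nonempty subsets of `T₁`, `T₂` satisfying the Shape
hypothesis, then the product collection `{A₁ × A₂ : A₁ ∈ 𝒜₁, A₂ ∈ 𝒜₂}` on `T₁ × T₂`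
also satisfies the Shape hypothesis. -/
theorem shape_of_product {T₁ T₂ : Type*} (𝒜₁ : Set (Set T₁)) (𝒜₂ : Set (Set T₂))
    (h₁ : ShapeHyp 𝒜₁) (h₂ : ShapeHyp 𝒜₂)
    (hne₁ : ∀ A ∈ 𝒜₁, A.Nonempty) (hne₂ : ∀ A ∈ 𝒜₂, A.Nonempty) :
    ShapeHyp {S : Set (T₁ × T₂) | ∃ A₁ ∈ 𝒜₁, ∃ A₂ ∈ 𝒜₂, S = A₁ ×ˢ A₂} := by
  classical
  rintro A ⟨A₁, hA₁, A₂, hA₂, rfl⟩ k f hf hcov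
  choose C hC D hD hfeq using hf
  -- Step 1: for each x ∈ A₁, there is i with x ∈ C i and A₂ ⊆ D i
  have step1 : ∀ x ∈ A₁, ∃ i, x ∈ C i ∧ A₂ ⊆ D i := by
    intro x hx
    have hcov2 : A₂ ⊆ ⋃ i ∈ Finset.univ.filter (fun i => x ∈ C i), D i := by
      intro y hy
      have : (x, y) ∈ ⋃ i, f i := hcov ⟨hx, hy⟩
      obtain ⟨i, hi⟩ := Set.mem_iUnion.1 this
      rw [hfeq i] at hi
      exact Set.mem_biUnion (Finset.mem_filter.2 ⟨Finset.mem_univ i, hi.1⟩) hi.2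
    obtain ⟨i, hi, hsub⟩ := shape_finset h₂ hA₂ _ D (fun i _ => hD i) hcov2
    exact ⟨i, by simpa using hi, hsub⟩
  -- Step 2: A₁ is covered by those C i with A₂ ⊆ D i
  have hcov1 : A₁ ⊆ ⋃ i ∈ Finset.univ.filter (fun i => A₂ ⊆ D i), C i := by
    intro x hx
    obtain ⟨i, hxi, hsub⟩ := step1 x hx
    exact Set.mem_biUnion (Finset.mem_filter.2 ⟨Finset.mem_univ i, hsub⟩) hxi
  obtain ⟨i, hi, hsub₁⟩ := shape_finset h₁ hA₁ _ C (fun i _ => hC i) hcov1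
  refine ⟨i, ?_⟩
  rw [hfeq i]
  exact Set.prod_mono hsub₁ (by simpa using hi)
end

section
/- Let $(\Omega, \mathcal{F}, \mathbb{P})$ be a probability space and let $X = (X_{s,t})_{(s,t) \in \mathbb{R}_+^2}$ be a two-parameter process with independent planar increments: for disjoint rectangles the rectangular increments $\Delta X_{(s,t],(s',t']} := X_{s',t'} - X_{s,t'} - X_{s',t} + X_{s,t}$ are independent, and each rectangular increment over a region disjoint from $[0,s'] \times [0,t'] \setminus ((s,s'] \times (t,t'])$-history is independent of the sigma-field generated by $X$ on $\{(u,v): u \le s \text{ or } v \le t\}$. Then $X$ satisfies the $\ast$-Markov property: for all $s,t \ge 0$ and $h,k > 0$ and any bounded measurable $f$, $\mathbb{E}[f(X_{s+h,t+k}) \mid \mathcal{G}^*_{s,t}] = \mathbb{E}[f(X_{s+h,t+k}) \mid X_{s,t}, X_{s+h,t}, X_{s,t+k}]$ a.s., where $\mathcal{G}^*_{s,t} = \sigma(X_{u,v} : u \le s \text{ or } v \le t, \text{ restricted appropriately to } u \le s+h, v \le t+k)$. -/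
/-!
Write `X_{s+h,t+k} = D + g` with the rectangular increment
`D = X_{s+h,t+k} - X_{s+h,t} - X_{s,t+k} + X_{s,t}` and `g = X_{s+h,t} + X_{s,t+k} - X_{s,t}`.
The increment `D` is independent of `𝒢*_{s,t}`, while `g` is measurable with respect to the
σ-field of the three corner values, which lies inside `𝒢*_{s,t}`. By the freezing lemma both
conditional expectations of `f(D + g)` equal `y ↦ 𝔼[f(D + y)]` evaluated at `g`.
-/

open MeasureTheory ProbabilityTheory

section Freezing

variable {Ω β γ : Type*} {m m0 : MeasurableSpace Ω} {μ : Measure Ω}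
  [MeasurableSpace β] [MeasurableSpace γ] {D : Ω → β} {g : Ω → γ}

lemma map_restrict_prodMk_eq_prod_of_indep [IsFiniteMeasure μ] (hm : m ≤ m0)
    (hD : Measurable D) (hg : Measurable[m] g)
    (hindep : Indep (MeasurableSpace.comap D inferInstance) m μ) {s : Set Ω}
    (hs : MeasurableSet[m] s) :
    (μ.restrict s).map (fun ω => (D ω, g ω)) = (μ.map D).prod ((μ.restrict s).map g) := by
  have hg0 : Measurable g := hg.mono hm le_rfl
  refine (Measure.prod_eq fun A B hA hB => ?_).symm
  rw [Measure.map_apply (hD.prodMk hg0) (hA.prod hB), Measure.map_apply hD hA,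
    Measure.map_apply hg0 hB, Measure.restrict_apply ((hD.prodMk hg0) (hA.prod hB)),
    Measure.restrict_apply (hg0 hB), Set.mk_preimage_prod, Set.inter_assoc]
  exact (Indep_iff _ _ _).1 hindep _ _ ⟨A, hA, rfl⟩ ((hg hB).inter hs)

lemma condExp_comp_prodMk_ae_eq_of_indep {E : Type*} [NormedAddCommGroup E] [NormedSpace ℝ E]
    [CompleteSpace E] [IsProbabilityMeasure μ] (hm : m ≤ m0)
    (hD : Measurable D) (hg : Measurable[m] g)
    (hindep : Indep (MeasurableSpace.comap D inferInstance) m μ)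
    {f : β × γ → E} (hf : StronglyMeasurable f) {C : ℝ} (hC : ∀ p, ‖f p‖ ≤ C) :
    μ[fun ω => f (D ω, g ω) | m] =ᵐ[μ] fun ω => ∫ ω', f (D ω', g ω) ∂μ := by
  have hg0 : Measurable g := hg.mono hm le_rfl
  set φ : γ → E := fun y => ∫ x, f (x, y) ∂μ.map D
  have hφ : (fun ω => ∫ ω', f (D ω', g ω) ∂μ) = φ ∘ g := by
    funext ω
    exact (integral_map hD.aemeasurable
      (hf.comp_measurable (measurable_id.prodMk measurable_const)).aestronglyMeasurable).symm
  have hφ_meas : StronglyMeasurable φ :=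
    StronglyMeasurable.integral_prod_left (f := fun x y => f (x, y)) hf
  have : IsProbabilityMeasure (μ.map D) := Measure.isProbabilityMeasure_map hD.aemeasurable
  have hφ_bound : ∀ y, ‖φ y‖ ≤ C := fun y => by
    simpa using norm_integral_le_of_norm_le_const (ae_of_all (μ.map D) fun x => hC (x, y))
  rw [hφ]
  refine (ae_eq_condExp_of_forall_setIntegral_eq hm
    (Integrable.of_bound (hf.comp_measurable (hD.prodMk hg0)).aestronglyMeasurable C
      (ae_of_all _ fun ω => hC _))
    (fun s _ _ => (Integrable.of_bound ((hφ_meas.comp_measurable hg0).aestronglyMeasurable) C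
      (ae_of_all _ fun ω => hφ_bound _)).integrableOn)
    (fun s hs _ => ?_) (hφ_meas.comp_measurable hg).aestronglyMeasurable).symm
  have hprod := map_restrict_prodMk_eq_prod_of_indep hm hD hg hindep hs
  calc ∫ ω in s, φ (g ω) ∂μ
      = ∫ y, φ y ∂(μ.restrict s).map g :=
        (integral_map hg0.aemeasurable hφ_meas.aestronglyMeasurable).symm
    _ = ∫ p, f p ∂(μ.map D).prod ((μ.restrict s).map g) :=
        (integral_prod_symm f (Integrable.of_bound hf.aestronglyMeasurable C
          (ae_of_all _ hC))).symm
    _ = ∫ ω in s, f (D ω, g ω) ∂μ := by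
        rw [← hprod, integral_map (hD.prodMk hg0).aemeasurable hf.aestronglyMeasurable]

lemma condExp_comp_prodMk_ae_eq_condExp_of_le {E : Type*} [NormedAddCommGroup E]
    [NormedSpace ℝ E] [CompleteSpace E] [IsProbabilityMeasure μ] {m' : MeasurableSpace Ω}
    (hm' : m' ≤ m) (hm : m ≤ m0) (hD : Measurable[m0] D) (hg : Measurable[m'] g)
    (hindep : Indep (MeasurableSpace.comap D inferInstance) m μ)
    {f : β × γ → E} (hf : StronglyMeasurable f) {C : ℝ} (hC : ∀ p, ‖f p‖ ≤ C) :
    μ[fun ω => f (D ω, g ω) | m] =ᵐ[μ] μ[fun ω => f (D ω, g ω) | m'] :=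
  (condExp_comp_prodMk_ae_eq_of_indep hm hD (hg.mono hm' le_rfl) hindep hf hC).trans
    (condExp_comp_prodMk_ae_eq_of_indep (hm'.trans hm) hD hg
      (indep_of_indep_of_le_right hindep hm') hf hC).symm

end Freezing

/-- A two-parameter process with independent planar increments satisfies the
`∗`-Markov property: for `s,t ≥ 0`, `h,k > 0` and bounded measurable `f`,
`𝔼[f(X_{s+h,t+k}) | 𝒢*_{s,t}] = 𝔼[f(X_{s+h,t+k}) | X_{s,t}, X_{s+h,t}, X_{s,t+k}]` a.s.,
where `𝒢*_{s,t} = σ(X_{u,v} : u ≤ s ∨ v ≤ t)`. -/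
theorem starMarkov_of_indep_increments
    {Ω : Type*} {m0 : MeasurableSpace Ω} (μ : Measure Ω) [IsProbabilityMeasure μ]
    (X : ℝ × ℝ → Ω → ℝ) (hXmeas : ∀ p, Measurable (X p))
    -- strong history σ-field 𝒢*_{s,t}
    (G : ℝ → ℝ → MeasurableSpace Ω)
    (hG : ∀ s t, G s t =
      ⨆ (p : ℝ × ℝ) (_ : p.1 ≤ s ∨ p.2 ≤ t), MeasurableSpace.comap (X p) inferInstance)
    -- independent increments: the rectangular increment over `(s,s+h] × (t,t+k]`
    -- is independent of the strong history 𝒢*_{s,t}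
    (hindep : ∀ s t h k : ℝ, 0 ≤ s → 0 ≤ t → 0 < h → 0 < k →
      Indep (MeasurableSpace.comap
          (fun ω => X (s + h, t + k) ω - X (s + h, t) ω - X (s, t + k) ω + X (s, t) ω)
          inferInstance)
        (G s t) μ) :
    ∀ s t h k : ℝ, 0 ≤ s → 0 ≤ t → 0 < h → 0 < k →
      ∀ f : ℝ → ℝ, Measurable f → (∃ C, ∀ x, |f x| ≤ C) →
        μ[fun ω => f (X (s + h, t + k) ω) | G s t] =ᵐ[μ]
          μ[fun ω => f (X (s + h, t + k) ω) |
            MeasurableSpace.comap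
              (fun ω => (X (s, t) ω, X (s + h, t) ω, X (s, t + k) ω)) inferInstance] := by
  intro s t h k hs ht hh hk f hf ⟨C, hC⟩
  set D : Ω → ℝ := fun ω => X (s + h, t + k) ω - X (s + h, t) ω - X (s, t + k) ω + X (s, t) ω
  set g : Ω → ℝ := fun ω => X (s + h, t) ω + X (s, t + k) ω - X (s, t) ω
  set corners : Ω → ℝ × ℝ × ℝ := fun ω => (X (s, t) ω, X (s + h, t) ω, X (s, t + k) ω)
  have hsplit :
      (fun ω => f (X (s + h, t + k) ω)) = fun ω => (f ∘ fun p => p.1 + p.2) (D ω, g ω) := by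
    funext ω
    simp only [Function.comp_apply, D, g]
    congr 1
    ring
  have hG_le : G s t ≤ m0 := by
    rw [hG]
    exact iSup₂_le fun p _ => (hXmeas p).comap_le
  have hX_G : ∀ p : ℝ × ℝ, p.1 ≤ s ∨ p.2 ≤ t → Measurable[G s t] (X p) := fun p hp => by
    refine Measurable.of_comap_le ?_
    rw [hG]
    exact le_iSup₂ (f := fun (p : ℝ × ℝ) (_ : p.1 ≤ s ∨ p.2 ≤ t) =>
      MeasurableSpace.comap (X p) inferInstance) p hp
  have hcorners_G : MeasurableSpace.comap corners inferInstance ≤ G s t :=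
    ((hX_G (s, t) (Or.inl le_rfl)).prodMk
      ((hX_G (s + h, t) (Or.inr le_rfl)).prodMk (hX_G (s, t + k) (Or.inl le_rfl)))).comap_le
  have hg : Measurable[MeasurableSpace.comap corners inferInstance] g :=
    let hc := comap_measurable corners
    (hc.snd.fst.add hc.snd.snd).sub hc.fst
  have hD : Measurable D := (((hXmeas _).sub (hXmeas _)).sub (hXmeas _)).add (hXmeas _)
  rw [hsplit]
  exact condExp_comp_prodMk_ae_eq_condExp_of_le hcorners_G hG_le hD hg
    (hindep s t h k hs ht hh hk) (hf.comp measurable_add).stronglyMeasurable fun p => hC _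
end

section
/- Let $h: \mathcal{A} \to \mathbb{R}$ be a function on a collection of sets closed under finite intersections and satisfying the Shape hypothesis, and let $\Delta h$ be its inclusion-exclusion extension to finite unions: $\Delta h(\bigcup_{i=1}^k A_i) = \sum_i h(A_i) - \sum_{i<j} h(A_i \cap A_j) + \dots + (-1)^{k+1} h(A_1 \cap \dots \cap A_k)$. Assume $\Delta h$ is well-defined (independent of the representation). Then for any $A' \in \mathcal{A}$ and any finite union $B$ of sets of $\mathcal{A}$, the modular identity holds: $\Delta h(B \cup A') + \Delta h(B \cap A') = \Delta h(B) + h(A')$, where $B \cap A'$ is the finite union $\bigcup_i (A_i \cap A')$. -/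
open Finset

private lemma powerset_map_aux' {α β : Type*} (f : α ↪ β) (s : Finset α) :
    (s.map f).powerset = s.powerset.map ⟨Finset.map f, Finset.map_injective f⟩ := by
  ext t
  simp only [mem_powerset, mem_map, Function.Embedding.coeFn_mk, Finset.subset_map_iff]
  constructor
  · rintro ⟨u, hu, rfl⟩; exact ⟨u, hu, rfl⟩
  · rintro ⟨u, hu, rfl⟩; exact ⟨u, hu, rfl⟩

private lemma filter_nonempty_sum' {ι : Type*} [Fintype ι] [DecidableEq ι] (f : Finset ι → ℝ) :
    ∑ s ∈ Finset.univ.powerset.filter (fun s : Finset ι => s.Nonempty), f s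
      = ∑ s ∈ (Finset.univ : Finset ι).powerset, f s - f ∅ := by
  have h1 : ((Finset.univ : Finset ι).powerset.filter (fun s => ¬ s.Nonempty)) = {∅} := by
    ext s; simp [Finset.not_nonempty_iff_eq_empty]
  have h2 := Finset.sum_filter_add_sum_filter_not (Finset.univ : Finset ι).powerset
    (fun s => s.Nonempty) f
  rw [h1, Finset.sum_singleton] at h2
  linarith

/-- Modular identity for the inclusion–exclusion extension. Let `𝒜` be a collection of
sets closed under finite intersections satisfying the Shape hypothesis, `h : 𝒜 → ℝ`,
and let `Δh` be a well-defined inclusion–exclusion extension to finite unions: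
`Δh(⋃ᵢ Aᵢ) = ∑_{∅ ≠ s ⊆ {1,…,k}} (-1)^{|s|+1} h(⋂_{i∈s} Aᵢ)`. Then for `A' ∈ 𝒜` and
any finite union `B = ⋃ᵢ Aᵢ` of members of `𝒜`,
`Δh(B ∪ A') + Δh(B ∩ A') = Δh(B) + h(A')`. -/
theorem incl_excl_extension_modular {T : Type*} (𝒜 : Set (Set T))
    (hinter : ∀ A ∈ 𝒜, ∀ B ∈ 𝒜, A ∩ B ∈ 𝒜)
    (hshape : ∀ A ∈ 𝒜, ∀ (k : ℕ) (f : Fin k → Set T), (∀ i, f i ∈ 𝒜) →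
      A ⊆ ⋃ i, f i → ∃ i, A ⊆ f i)
    (h : Set T → ℝ) (Δh : Set T → ℝ)
    (hΔ : ∀ (k : ℕ) (A : Fin k → Set T), (∀ i, A i ∈ 𝒜) →
      Δh (⋃ i, A i) =
        ∑ s ∈ Finset.univ.powerset.filter (fun s : Finset (Fin k) => s.Nonempty),
          (-1 : ℝ) ^ (s.card + 1) * h (⋂ i ∈ s, A i))
    (A' : Set T) (hA' : A' ∈ 𝒜)
    (k : ℕ) (A : Fin k → Set T) (hA : ∀ i, A i ∈ 𝒜) :
    Δh ((⋃ i, A i) ∪ A') + Δh (⋃ i, A i ∩ A') = Δh (⋃ i, A i) + h A' := by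
  classical
  set e : Fin k ↪ Fin (k + 1) := ⟨Fin.succ, Fin.succ_injective k⟩ with he
  set g : Fin (k + 1) → Set T := Fin.cons A' A with hg
  have hgmem : ∀ i, g i ∈ 𝒜 := by
    intro i
    induction i using Fin.cases with
    | zero => simpa [hg] using hA'
    | succ j => simpa [hg] using hA j
  have hU : (⋃ i, g i) = (⋃ i, A i) ∪ A' := by
    ext x
    simp only [Set.mem_iUnion, Set.mem_union, Fin.exists_fin_succ, hg, Fin.cons_zero,
      Fin.cons_succ]
    tauto
  have hAA' : ∀ i, A i ∩ A' ∈ 𝒜 := fun i => hinter _ (hA i) _ hA'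
  -- the three inclusion-exclusion expansions
  have E1 : Δh ((⋃ i, A i) ∪ A') =
      ∑ s ∈ Finset.univ.powerset.filter (fun s : Finset (Fin (k+1)) => s.Nonempty),
        (-1 : ℝ) ^ (s.card + 1) * h (⋂ i ∈ s, g i) := by
    rw [← hU]; exact hΔ (k+1) g hgmem
  have E2 := hΔ k (fun i => A i ∩ A') hAA'
  have E3 := hΔ k A hA
  rw [E1, E2, E3]
  -- convert filtered sums to full powerset sums
  rw [filter_nonempty_sum' (fun s : Finset (Fin (k+1)) => (-1:ℝ)^(s.card+1) * h (⋂ i ∈ s, g i)),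
    filter_nonempty_sum' (fun s : Finset (Fin k) => (-1:ℝ)^(s.card+1) * h (⋂ i ∈ s, A i ∩ A')),
    filter_nonempty_sum' (fun s : Finset (Fin k) => (-1:ℝ)^(s.card+1) * h (⋂ i ∈ s, A i))]
  simp only [Finset.card_empty, pow_one, Finset.notMem_empty, Set.iInter_of_empty,
    Set.iInter_univ, zero_add, neg_one_mul, sub_neg_eq_add]
  -- split the big powerset sum
  have huniv : (Finset.univ : Finset (Fin (k+1))) = insert 0 (Finset.univ.map e) := by
    rw [Fin.univ_succ]; simp [Finset.cons_eq_insert, he]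
  have h0 : (0 : Fin (k+1)) ∉ (Finset.univ : Finset (Fin k)).map e := by
    simp [he, Fin.succ_ne_zero]
  rw [huniv, Finset.sum_powerset_insert h0, powerset_map_aux' e, Finset.sum_map]
  -- identify the biInter over mapped sets
  have hmap : ∀ t : Finset (Fin k), (⋂ i ∈ t.map e, g i) = ⋂ j ∈ t, A j := by
    intro t
    ext x
    simp only [Set.mem_iInter, Finset.mem_map, he, Function.Embedding.coeFn_mk]
    constructor
    · intro hx j hj
      have := hx j.succ ⟨j, hj, rfl⟩
      simpa [hg] using this
    · rintro hx i ⟨j, hj, rfl⟩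
      simpa [hg] using hx j hj
  have hcard : ∀ t : Finset (Fin k), (t.map e).card = t.card := fun t => Finset.card_map e
  have hinsert : ∀ t : Finset (Fin k),
      ((insert (0 : Fin (k+1)) (t.map e)).card = t.card + 1) ∧
      (⋂ i ∈ insert (0 : Fin (k+1)) (t.map e), g i) = A' ∩ ⋂ j ∈ t, A j := by
    intro t
    have h0t : (0 : Fin (k+1)) ∉ t.map e := by simp [he, Fin.succ_ne_zero]
    constructor
    · rw [Finset.card_insert_of_notMem h0t, hcard]
    · rw [Finset.set_biInter_insert, hmap]
      simp [hg]
  -- rewrite the two sums over Finset (Fin k)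
  have S1 : ∑ t ∈ (Finset.univ : Finset (Fin k)).powerset,
      (fun s : Finset (Fin (k+1)) => (-1:ℝ)^(s.card+1) * h (⋂ i ∈ s, g i))
        ((⟨Finset.map e, Finset.map_injective e⟩ : Finset (Fin k) ↪ Finset (Fin (k+1))) t)
      = ∑ t ∈ (Finset.univ : Finset (Fin k)).powerset, (-1:ℝ)^(t.card+1) * h (⋂ j ∈ t, A j) := by
    refine Finset.sum_congr rfl fun t _ => ?_
    simp only [Function.Embedding.coeFn_mk, hcard t, hmap t]
  have S2 : ∑ t ∈ ((Finset.univ : Finset (Fin k)).powerset.map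
        (⟨Finset.map e, Finset.map_injective e⟩ : Finset (Fin k) ↪ Finset (Fin (k+1)))),
      (fun s : Finset (Fin (k+1)) => (-1:ℝ)^(s.card+1) * h (⋂ i ∈ s, g i)) (insert 0 t)
      = ∑ t ∈ (Finset.univ : Finset (Fin k)).powerset,
          (-1:ℝ)^t.card * h (A' ∩ ⋂ j ∈ t, A j) := by
    rw [Finset.sum_map]
    refine Finset.sum_congr rfl fun t _ => ?_
    simp only [Function.Embedding.coeFn_mk, (hinsert t).1, (hinsert t).2]
    ring_nf
  rw [S1, S2]
  have hne : ∀ t : Finset (Fin k), t.Nonempty →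
      (⋂ j ∈ t, (A j ∩ A')) = A' ∩ ⋂ j ∈ t, A j := by
    intro t ht
    obtain ⟨j0, hj0⟩ := ht
    ext x
    simp only [Set.mem_iInter, Set.mem_inter_iff]
    constructor
    · intro hx
      exact ⟨(hx j0 hj0).2, fun j hj => (hx j hj).1⟩
    · intro hx j hj
      exact ⟨hx.2 j hj, hx.1⟩
  have key : ∑ t ∈ (Finset.univ : Finset (Fin k)).powerset,
      ((-1:ℝ)^t.card * h (A' ∩ ⋂ j ∈ t, A j) + (-1:ℝ)^(t.card+1) * h (⋂ j ∈ t, A j ∩ A'))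
      = h A' - h Set.univ := by
    have hf := filter_nonempty_sum' (fun t : Finset (Fin k) =>
      (-1:ℝ)^t.card * h (A' ∩ ⋂ j ∈ t, A j) + (-1:ℝ)^(t.card+1) * h (⋂ j ∈ t, A j ∩ A'))
    have hz : ∑ t ∈ Finset.univ.powerset.filter (fun t : Finset (Fin k) => t.Nonempty),
        ((-1:ℝ)^t.card * h (A' ∩ ⋂ j ∈ t, A j)
          + (-1:ℝ)^(t.card+1) * h (⋂ j ∈ t, A j ∩ A')) = 0 := by
      refine Finset.sum_eq_zero fun t ht => ?_
      have htne : t.Nonempty := (Finset.mem_filter.1 ht).2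
      rw [hne t htne, pow_succ]
      ring
    rw [hz] at hf
    simp only [Finset.card_empty, pow_zero, pow_one, Finset.notMem_empty,
      Set.iInter_of_empty, Set.iInter_univ, Set.inter_univ, one_mul, neg_one_mul, zero_add] at hf
    linarith
  have hsum := Finset.sum_add_distrib (s := (Finset.univ : Finset (Fin k)).powerset)
    (f := fun t : Finset (Fin k) => (-1:ℝ)^t.card * h (A' ∩ ⋂ j ∈ t, A j))
    (g := fun t : Finset (Fin k) => (-1:ℝ)^(t.card+1) * h (⋂ j ∈ t, A j ∩ A'))
  rw [hsum] at key
  linarith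
end

section
/- Let $(\Omega, \mathcal{F}, \mathbb{P})$ be a probability space, $Z_1, \dots, Z_n$ i.i.d. random variables with values in a measurable space $(\mathcal{T}, \mathcal{B})$, and define the empirical process $X_A = \sum_{j=1}^n \mathbf{1}_{\{Z_j \in A\}}$ for measurable $A$. Specialize to $\mathcal{T} = [0,1]^2$, $n = 1$, and the indexing collection $\mathcal{A} = \{[0,t] : t \in [0,1]^2\}$. Exhibit an increment $C = A \setminus B$ with $B = A_1 \cup A_2 \subseteq A$ such that $\mathbb{E}[X_A \mid \mathcal{G}^*_C] \ne \mathbb{E}[X_A \mid X_{A_1}, X_{A_2}, X_{A_1 \cap A_2}]$ with positive probability: i.e., the empirical process is not $\mathcal{C}$-Markov (not $\ast$-Markov). -/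
/-!
Take `a = (1/2, 1/2)`, `b = (1/2, 1/4)`, `c = (1/4, 1/2)`, so that `C = (1/4, 1/2]²`.
The rectangles `[0, (1, 1/4)]` and `[0, b]` miss `C`, so the event
`G = {Z ∈ [0, (1, 1/4)] \ [0, b]}` of probability `1/8` lies in `𝒢*_C`; since `Z ∉ [0, a]` on `G`,
`𝔼[X_A | 𝒢*_C] = 0` on `G`. But `G` lies in the atom `{X_b = X_c = X_{b ⊓ c} = 0}` of the
corner vector, on which `𝔼[X_A | X_b, X_c, X_{b ⊓ c}]` is constant with integral `P(Z ∈ C) > 0`.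
-/

open MeasureTheory ProbabilityTheory

/-- The empirical set-indexed process attached to a random point `Z`. -/
noncomputable def empProc {Ω : Type*} (Z : Ω → ℝ × ℝ) (A : Set (ℝ × ℝ)) (ω : Ω) : ℝ :=
  open scoped Classical in
  if Z ω ∈ A then 1 else 0

/-- Strong history `𝒢*_C` for the increment `C = A \ (A₁ ∪ A₂)` of the empirical
process: generated by the values on rectangles `[0,u]` disjoint from `C`. -/
noncomputable def empHist {Ω : Type*} (Z : Ω → ℝ × ℝ) (a b c : ℝ × ℝ) :
    MeasurableSpace Ω :=
  ⨆ (u : ℝ × ℝ)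
    (_ : Set.Icc 0 u ∩ (Set.Icc 0 a \ (Set.Icc 0 b ∪ Set.Icc 0 c)) = ∅),
    MeasurableSpace.comap (empProc Z (Set.Icc 0 u)) inferInstance

open Set

section Rectangles

variable {α β : Type*} [Preorder α] [Preorder β]

theorem Icc_inter_Icc_subset_Icc_of_le {l a b u : α × β} (hab : a.1 ≤ b.1) (hub : u.2 ≤ b.2) :
    Icc l u ∩ Icc l a ⊆ Icc l b :=
  fun _ ⟨⟨hl, hu⟩, _, ha⟩ => ⟨hl, ha.1.trans hab, hu.2.trans hub⟩

theorem Icc_inter_Icc_diff_union_eq_empty {l a b c u : α × β} (hab : a.1 ≤ b.1)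
    (hub : u.2 ≤ b.2) : Icc l u ∩ (Icc l a \ (Icc l b ∪ Icc l c)) = ∅ := by
  rw [← inter_sdiff_assoc, sdiff_eq_empty]
  exact (Icc_inter_Icc_subset_Icc_of_le hab hub).trans subset_union_left

end Rectangles

theorem Ioc_prod_Ioc_subset_Icc_diff_union {x₁ x₂ y₁ y₂ : ℝ} (hx₁ : 0 ≤ x₁) (hy₁ : 0 ≤ y₁)
    (x y : ℝ) :
    Ioc x₁ x₂ ×ˢ Ioc y₁ y₂ ⊆ Icc 0 (x₂, y₂) \ (Icc 0 (x₁, y) ∪ Icc 0 (x, y₁)) := by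
  rintro p ⟨⟨hpx₁, hpx₂⟩, hpy₁, hpy₂⟩
  refine ⟨⟨⟨hx₁.trans hpx₁.le, hy₁.trans hpy₁.le⟩, hpx₂, hpy₂⟩, ?_⟩
  rintro (⟨-, hp, -⟩ | ⟨-, -, hp⟩)
  exacts [hpx₁.not_ge hp, hpy₁.not_ge hp]

section CondExp

variable {Ω β : Type*} {m m0 : MeasurableSpace Ω} {μ : Measure Ω} [IsFiniteMeasure μ]
  [MeasurableSpace β] [MeasurableSingletonClass β]

/-- `P(E | m)` vanishes on the `m`-event `G` disjoint from `E`, whereas `P(E | T)` is constant on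
the atom `T⁻¹' {v} ⊇ G`, where its integral is `μ (T⁻¹' {v} ∩ E) > 0`. -/
theorem condExp_indicator_not_ae_eq_condExp_comap (hm : m ≤ m0) {T : Ω → β} (hT : Measurable T)
    {E G : Set Ω} (hE : MeasurableSet E) (hG : MeasurableSet[m] G) (hμG : μ G ≠ 0)
    (hGE : Disjoint G E) {v : β} (hGT : G ⊆ T ⁻¹' {v}) (hTE : μ (T ⁻¹' {v} ∩ E) ≠ 0) :
    ¬ μ[E.indicator (1 : Ω → ℝ) | m] =ᵐ[μ]
      μ[E.indicator 1 | MeasurableSpace.comap T inferInstance] := by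
  intro h
  set g := μ[E.indicator (1 : Ω → ℝ) | MeasurableSpace.comap T inferInstance]
  have hE_G : E.indicator (1 : Ω → ℝ) =ᵐ[μ.restrict G] 0 := by
    filter_upwards [ae_restrict_mem (hm _ hG)] with ω hω
    exact indicator_of_notMem (hGE.notMem_of_mem_left hω) _
  have hg_G : g =ᵐ[μ.restrict G] 0 :=
    Filter.EventuallyEq.trans (ae_restrict_of_ae h.symm) (condExp_ae_eq_restrict_zero hG hE_G)
  have : (ae (μ.restrict G)).NeBot := ae_neBot.mpr (by simpa using hμG)
  obtain ⟨ω₀, hω₀G, hgω₀⟩ := ((ae_restrict_mem (hm _ hG)).and hg_G).exists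
  have hg_fiber : ∀ ω ∈ T ⁻¹' {v}, g ω = 0 := fun ω hω =>
    (stronglyMeasurable_condExp.measurable.factorsThrough (hω.trans (hGT hω₀G).symm)).trans hgω₀
  have hfiber : MeasurableSet[MeasurableSpace.comap T inferInstance] (T ⁻¹' {v}) :=
    ⟨_, measurableSet_singleton v, rfl⟩
  have hint : ∫ ω in T ⁻¹' {v}, E.indicator (1 : Ω → ℝ) ω ∂μ = 0 := by
    rw [← setIntegral_condExp hT.comap_le ((integrable_const 1).indicator hE) hfiber]
    exact setIntegral_eq_zero_of_forall_eq_zero hg_fiber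
  rw [integral_indicator_one hE, measureReal_restrict_apply hE, measureReal_eq_zero_iff] at hint
  exact hTE (by rwa [inter_comm])

end CondExp

section EmpiricalProcess

variable {Ω : Type*} {m0 : MeasurableSpace Ω} {Z : Ω → ℝ × ℝ}

noncomputable def cornerVector (Z : Ω → ℝ × ℝ) (b c : ℝ × ℝ) (ω : Ω) : ℝ × ℝ × ℝ :=
  (empProc Z (Icc 0 b) ω, empProc Z (Icc 0 c) ω, empProc Z (Icc 0 (b ⊓ c)) ω)

theorem empProc_eq_indicator (Z : Ω → ℝ × ℝ) (A : Set (ℝ × ℝ)) :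
    empProc Z A = (Z ⁻¹' A).indicator 1 := by
  classical
  ext ω
  simp [empProc, indicator_apply]

theorem empProc_eq_zero_iff {A : Set (ℝ × ℝ)} {ω : Ω} : empProc Z A ω = 0 ↔ Z ω ∉ A := by
  simp [empProc_eq_indicator]

theorem measurable_empProc (hZ : Measurable Z) {A : Set (ℝ × ℝ)} (hA : MeasurableSet A) :
    Measurable (empProc Z A) := by
  rw [empProc_eq_indicator]
  exact measurable_const.indicator (hZ hA)

theorem measurable_cornerVector (hZ : Measurable Z) (b c : ℝ × ℝ) :
    Measurable (cornerVector Z b c) :=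
  (measurable_empProc hZ measurableSet_Icc).prodMk
    ((measurable_empProc hZ measurableSet_Icc).prodMk (measurable_empProc hZ measurableSet_Icc))

theorem cornerVector_preimage_zero (Z : Ω → ℝ × ℝ) (b c : ℝ × ℝ) :
    cornerVector Z b c ⁻¹' {0} = Z ⁻¹' (Icc 0 b ∪ Icc 0 c)ᶜ := by
  ext ω
  simp only [cornerVector, mem_preimage, mem_singleton_iff, Prod.ext_iff, Prod.fst_zero,
    Prod.snd_zero, empProc_eq_zero_iff, mem_compl_iff, mem_union, not_or]
  exact ⟨fun h => ⟨h.1, h.2.1⟩,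
    fun h => ⟨h.1, h.2, fun h' => h.1 (Icc_subset_Icc_right inf_le_left h')⟩⟩

theorem empHist_le (hZ : Measurable Z) (a b c : ℝ × ℝ) : empHist Z a b c ≤ m0 :=
  iSup₂_le fun _ _ => (measurable_empProc hZ measurableSet_Icc).comap_le

theorem measurableSet_empHist_preimage_Icc {a b c u : ℝ × ℝ}
    (hu : Icc 0 u ∩ (Icc 0 a \ (Icc 0 b ∪ Icc 0 c)) = ∅) :
    MeasurableSet[empHist Z a b c] (Z ⁻¹' Icc 0 u) := by
  refine le_iSup₂ (f := fun u (_ : Icc 0 u ∩ (Icc 0 a \ (Icc 0 b ∪ Icc 0 c)) = ∅) =>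
    MeasurableSpace.comap (empProc Z (Icc 0 u)) inferInstance) u hu _
    ⟨{1}, measurableSet_singleton _, ?_⟩
  ext ω
  by_cases h : Z ω ∈ Icc 0 u <;> simp [empProc, h]

theorem measure_preimage_Ioc_prod_Ioc {μ : Measure Ω} (hZ : Measurable Z)
    (hZunif : Measure.map Z μ = volume.restrict (Icc (0 : ℝ) 1 ×ˢ Icc (0 : ℝ) 1))
    {x₁ x₂ y₁ y₂ : ℝ} (hx₁ : 0 ≤ x₁) (hx₂ : x₂ ≤ 1) (hy₁ : 0 ≤ y₁) (hy₂ : y₂ ≤ 1) :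
    μ (Z ⁻¹' (Ioc x₁ x₂ ×ˢ Ioc y₁ y₂)) = ENNReal.ofReal (x₂ - x₁) * ENNReal.ofReal (y₂ - y₁) := by
  have hS : MeasurableSet (Ioc x₁ x₂ ×ˢ Ioc y₁ y₂) := measurableSet_Ioc.prod measurableSet_Ioc
  have hsub : Ioc x₁ x₂ ×ˢ Ioc y₁ y₂ ⊆ Icc (0 : ℝ) 1 ×ˢ Icc (0 : ℝ) 1 :=
    prod_mono (Ioc_subset_Icc_self.trans (Icc_subset_Icc hx₁ hx₂))
      (Ioc_subset_Icc_self.trans (Icc_subset_Icc hy₁ hy₂))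
  rw [← Measure.map_apply hZ hS, hZunif, Measure.restrict_apply hS, inter_eq_left.mpr hsub,
    Measure.volume_eq_prod, Measure.prod_prod, Real.volume_Ioc, Real.volume_Ioc]

theorem measure_preimage_ne_zero_of_Ioc_prod_Ioc_subset {μ : Measure Ω} (hZ : Measurable Z)
    (hZunif : Measure.map Z μ = volume.restrict (Icc (0 : ℝ) 1 ×ˢ Icc (0 : ℝ) 1))
    {x₁ x₂ y₁ y₂ : ℝ} {S : Set (ℝ × ℝ)} (hS : Ioc x₁ x₂ ×ˢ Ioc y₁ y₂ ⊆ S) (hx₁ : 0 ≤ x₁)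
    (hx : x₁ < x₂) (hx₂ : x₂ ≤ 1) (hy₁ : 0 ≤ y₁) (hy : y₁ < y₂) (hy₂ : y₂ ≤ 1) :
    μ (Z ⁻¹' S) ≠ 0 := by
  refine ne_bot_of_le_ne_bot ?_ (measure_mono (preimage_mono hS))
  rw [measure_preimage_Ioc_prod_Ioc hZ hZunif hx₁ hx₂ hy₁ hy₂]
  simp [hx, hy]

end EmpiricalProcess

/-- The empirical process of a single uniform point on `[0,1]²`, indexed by rectangles
`[0,t]`, is **not** `𝒞`-Markov: there is an increment `C = [0,a] \ ([0,b] ∪ [0,c])` with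
`[0,b] ∪ [0,c] ⊆ [0,a]` for which
`𝔼[X_A | 𝒢*_C] ≠ 𝔼[X_A | X_{[0,b]}, X_{[0,c]}, X_{[0,b∧c]}]` with positive
probability. -/
theorem empirical_not_cMarkov
    {Ω : Type*} {m0 : MeasurableSpace Ω} (μ : Measure Ω) [IsProbabilityMeasure μ]
    (Z : Ω → ℝ × ℝ) (hZmeas : Measurable Z)
    (hZunif : Measure.map Z μ =
      (volume : Measure (ℝ × ℝ)).restrict (Set.Icc (0 : ℝ) 1 ×ˢ Set.Icc (0 : ℝ) 1)) :
    ∃ a b c : ℝ × ℝ,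
      a ∈ Set.Icc (0 : ℝ × ℝ) 1 ∧ b ∈ Set.Icc (0 : ℝ × ℝ) 1 ∧
      c ∈ Set.Icc (0 : ℝ × ℝ) 1 ∧
      Set.Icc 0 b ∪ Set.Icc 0 c ⊆ Set.Icc 0 a ∧
      ¬ (μ[empProc Z (Set.Icc 0 a) | empHist Z a b c] =ᵐ[μ]
          μ[empProc Z (Set.Icc 0 a) |
            MeasurableSpace.comap (fun ω =>
              (empProc Z (Set.Icc 0 b) ω, empProc Z (Set.Icc 0 c) ω,
                empProc Z (Set.Icc 0 (b ⊓ c)) ω)) inferInstance]) := by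
  refine ⟨(1/2, 1/2), (1/2, 1/4), (1/4, 1/2), by norm_num [Prod.le_def],
    by norm_num [Prod.le_def], by norm_num [Prod.le_def],
    union_subset (Icc_subset_Icc_right (by norm_num [Prod.le_def]))
      (Icc_subset_Icc_right (by norm_num [Prod.le_def])), ?_⟩
  have hsub : ∀ x : ℝ × ℝ, x.1 ≤ 1/2 → Icc 0 (1, 1/4) ∩ Icc 0 x ⊆ Icc 0 (1/2, 1/4) :=
    fun _ hx => Icc_inter_Icc_subset_Icc_of_le hx le_rfl
  rw [empProc_eq_indicator Z (Icc 0 _)]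
  refine condExp_indicator_not_ae_eq_condExp_comap (empHist_le hZmeas _ _ _)
    (measurable_cornerVector hZmeas _ _) (hZmeas measurableSet_Icc)
    (G := Z ⁻¹' (Icc 0 (1, 1/4) \ Icc 0 (1/2, 1/4))) (v := 0) ?hG ?hμG ?hGE ?hGT ?hTE
  case hG =>
    exact (measurableSet_empHist_preimage_Icc
      (Icc_inter_Icc_diff_union_eq_empty (by norm_num) (by norm_num))).diff
      (measurableSet_empHist_preimage_Icc
        (Icc_inter_Icc_diff_union_eq_empty (by norm_num) (by norm_num)))
  case hμG =>
    refine measure_preimage_ne_zero_of_Ioc_prod_Ioc_subset hZmeas hZunif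
      ((Ioc_prod_Ioc_subset_Icc_diff_union (x₁ := 1/2) (y₁ := 0) (by norm_num) le_rfl 0 (1/4)).trans
        (sdiff_subset_sdiff_right subset_union_left)) ?_ ?_ ?_ ?_ ?_ ?_ <;> norm_num
  case hGE =>
    exact (disjoint_left.mpr fun p hp hpa => hp.2 (hsub (1/2, 1/2) le_rfl ⟨hp.1, hpa⟩)).preimage Z
  case hGT =>
    rw [cornerVector_preimage_zero]
    refine preimage_mono fun p hp => ?_
    rintro (h | h)
    exacts [hp.2 h, hp.2 (hsub (1/4, 1/2) (by norm_num) ⟨hp.1, h⟩)]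
  case hTE =>
    rw [cornerVector_preimage_zero, ← preimage_inter]
    refine measure_preimage_ne_zero_of_Ioc_prod_Ioc_subset hZmeas hZunif
      ((Ioc_prod_Ioc_subset_Icc_diff_union (x₁ := 1/4) (x₂ := 1/2) (y₁ := 1/4) (y₂ := 1/2)
        (by norm_num) (by norm_num) (1/2) (1/2)).trans_eq
        (by rw [union_comm, sdiff_eq, inter_comm])) ?_ ?_ ?_ ?_ ?_ ?_ <;> norm_num
end
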